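/- Let G be a finite simple bipartite graph with parts V₁ and V₂, let w : V → ℝ≥0 be a nonnegative weight function satisfying the generalized Hall's condition for V₁ (w(S) ≤ w(N(S)) for all S ⊆ V₁), and let Π be any vertex cover of G. Then w(V₁ \ Π) ≤ w(Π ∩ V₂), and consequently w(Π) = w(Π ∩ V₁) + w(Π ∩ V₂) ≥ w(Π ∩ V₁) + w(V₁ \ Π) = w(V₁). -/

import Mathlib

/-- `P` is a vertex cover of `G`: every edge has at least one endpoint in `P`. -/
def IsVertexCover {V : Type*} (G : SimpleGraph V) (P : Finset V) : Prop :=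
  ∀ u v, G.Adj u v → u ∈ P ∨ v ∈ P

/-- The neighborhood `N(S)` of a set of vertices: all vertices adjacent to some vertex of `S`. -/
def nbhd {V : Type*} [Fintype V] [DecidableEq V] (G : SimpleGraph V) [DecidableRel G.Adj]
    (S : Finset V) : Finset V :=
  S.biUnion (fun v => G.neighborFinset v)

/-!
A vertex of `V₁` outside the cover `Π` has all its neighbours in `Π`, and they lie in `V₂`;
so `N(V₁ \ Π) ⊆ Π ∩ V₂`, and Hall's condition for `S = V₁ \ Π` gives
`w(V₁ \ Π) ≤ w(N(V₁ \ Π)) ≤ w(Π ∩ V₂)`. The rest is splitting sums along the bipartition.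
-/

open Finset

section Neighborhood

variable {V : Type*} [Fintype V] [DecidableEq V] {G : SimpleGraph V} [DecidableRel G.Adj]

theorem mem_nbhd {S : Finset V} {v : V} : v ∈ nbhd G S ↔ ∃ u ∈ S, G.Adj u v := by
  simp only [nbhd, mem_biUnion, SimpleGraph.mem_neighborFinset]

theorem IsVertexCover.nbhd_sdiff_subset {P : Finset V} (hP : IsVertexCover G P) (S : Finset V) :
    nbhd G (S \ P) ⊆ P := by
  intro v hv
  obtain ⟨u, hu, huv⟩ := mem_nbhd.mp hv
  exact (hP u v huv).resolve_left (mem_sdiff.mp hu).2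

theorem nbhd_subset_of_bipartite {V₁ V₂ S : Finset V} (hdisj : Disjoint V₁ V₂)
    (hbip : ∀ u v, G.Adj u v → (u ∈ V₁ ∧ v ∈ V₂) ∨ (u ∈ V₂ ∧ v ∈ V₁)) (hS : S ⊆ V₁) :
    nbhd G S ⊆ V₂ := by
  intro v hv
  obtain ⟨u, hu, huv⟩ := mem_nbhd.mp hv
  rcases hbip u v huv with ⟨-, hv₂⟩ | ⟨hu₂, -⟩
  · exact hv₂
  · exact absurd hu₂ (disjoint_left.mp hdisj (hS hu))

end Neighborhood

theorem sum_eq_sum_inter_add_sum_inter_of_isCompl {V M : Type*} [DecidableEq V] [Fintype V]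
    [AddCommMonoid M] {V₁ V₂ : Finset V} (h : IsCompl V₁ V₂) (P : Finset V) (f : V → M) :
    P.sum f = (P ∩ V₁).sum f + (P ∩ V₂).sum f := by
  rw [← sum_inter_add_sum_sdiff P V₁ f, sdiff_eq_inter_compl, h.compl_eq]

/-- Under the generalized Hall's condition for `V₁`, for any vertex cover
`P` one has `w(V₁ \ P) ≤ w(P ∩ V₂)`, and consequently
`w(P) = w(P ∩ V₁) + w(P ∩ V₂) ≥ w(P ∩ V₁) + w(V₁ \ P) = w(V₁)`. -/
theorem GHC_sufficiency_chain {V : Type*} [Fintype V] [DecidableEq V]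
    (G : SimpleGraph V) [DecidableRel G.Adj]
    (V₁ V₂ : Finset V)
    (hdisj : Disjoint V₁ V₂) (hunion : V₁ ∪ V₂ = Finset.univ)
    (hbip : ∀ u v, G.Adj u v → (u ∈ V₁ ∧ v ∈ V₂) ∨ (u ∈ V₂ ∧ v ∈ V₁))
    (w : V → ℝ) (hw : ∀ v, 0 ≤ w v)
    (hGHC : ∀ S ⊆ V₁, S.sum w ≤ (nbhd G S).sum w)
    (P : Finset V) (hP : IsVertexCover G P) :
    (V₁ \ P).sum w ≤ (P ∩ V₂).sum w ∧
      P.sum w = (P ∩ V₁).sum w + (P ∩ V₂).sum w ∧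
      (P ∩ V₁).sum w + (V₁ \ P).sum w = V₁.sum w ∧
      V₁.sum w ≤ P.sum w := by
  have hcover : nbhd G (V₁ \ P) ⊆ P ∩ V₂ :=
    subset_inter (hP.nbhd_sdiff_subset V₁) (nbhd_subset_of_bipartite hdisj hbip sdiff_subset)
  have hHall : (V₁ \ P).sum w ≤ (P ∩ V₂).sum w :=
    (hGHC _ sdiff_subset).trans (sum_le_sum_of_subset_of_nonneg hcover fun v _ _ => hw v)
  have hsplitP : P.sum w = (P ∩ V₁).sum w + (P ∩ V₂).sum w :=
    sum_eq_sum_inter_add_sum_inter_of_isCompl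
      ⟨hdisj, codisjoint_iff.mpr (hunion.trans top_eq_univ.symm)⟩ P w
  have hsplitV₁ : (P ∩ V₁).sum w + (V₁ \ P).sum w = V₁.sum w := by
    rw [inter_comm]
    exact sum_inter_add_sum_sdiff V₁ P w
  exact ⟨hHall, hsplitP, hsplitV₁, by linarith⟩
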